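/- Let ξ ∈ L², S a continuous process with E[sup_t S_t²] < ∞, and ν ≤ T a stopping time. Then e^{−n(T−ν)}ξ + n∫_ν^T e^{−n(s−ν)} S_s ds converges to ξ·1_{ν=T} + S_ν·1_{ν<T} almost surely and in L² as n → ∞. -/

import Mathlib

/-!
The kernel `n e^{-n(s-ν)}` on `[ν, T]` has mass `1 - e^{-n(T-ν)}`, the remaining mass
`e^{-n(T-ν)}` sitting on `ξ`; so the approximant is an average of `ξ` and the values of `S` on
`[ν, T]`, bounded by `|ξ| + sup |S|`. As `n → ∞` the kernel concentrates at `ν`, which gives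
pointwise convergence by continuity of `S` at `ν` (when `ν < T`); the square of the bound is
integrable, so dominated convergence gives the `L²` convergence.
-/

open MeasureTheory Set Filter Topology Real

lemma tendsto_exp_neg_natCast_mul {x : ℝ} (hx : 0 < x) :
    Tendsto (fun n : ℕ => exp (-n * x)) atTop (𝓝 0) := by
  have h : Tendsto (fun n : ℕ => (n : ℝ) * x) atTop atTop :=
    tendsto_natCast_atTop_atTop.atTop_mul_const hx
  simpa only [neg_mul, Function.comp_def] using tendsto_exp_neg_atTop_nhds_zero.comp h

lemma integral_mul_exp_neg_mul_sub (c a a' b : ℝ) :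
    ∫ s in a'..b, c * exp (-c * (s - a)) = exp (-c * (a' - a)) - exp (-c * (b - a)) := by
  have hderiv : ∀ s ∈ uIcc a' b,
      HasDerivAt (fun s => -exp (-c * (s - a))) (c * exp (-c * (s - a))) s := by
    intro s _
    refine (((hasDerivAt_id s).sub_const a).const_mul (-c)).exp.neg.congr_deriv ?_
    simp only [id]
    ring
  rw [intervalIntegral.integral_eq_sub_of_hasDerivAt hderiv
    (Continuous.intervalIntegrable (by fun_prop) _ _)]
  ring

lemma abs_mul_integral_exp_neg_mul_sub_mul_le {c a a' b M : ℝ} (hc : 0 ≤ c) (hab : a' ≤ b)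
    {f : ℝ → ℝ} (hfM : ∀ s ∈ Icc a' b, |f s| ≤ M) :
    |c * ∫ s in a'..b, exp (-c * (s - a)) * f s| ≤ exp (-c * (a' - a)) * M := by
  have hM : 0 ≤ M := (abs_nonneg _).trans (hfM a' ⟨le_rfl, hab⟩)
  rw [← intervalIntegral.integral_const_mul]
  calc |∫ s in a'..b, c * (exp (-c * (s - a)) * f s)|
      ≤ ∫ s in a'..b, c * exp (-c * (s - a)) * M := by
        rw [← Real.norm_eq_abs]
        refine intervalIntegral.norm_integral_le_of_norm_le hab (ae_of_all _ fun s hs => ?_)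
          (Continuous.intervalIntegrable (by fun_prop) _ _)
        rw [Real.norm_eq_abs, ← mul_assoc, abs_mul, abs_of_nonneg (by positivity)]
        exact mul_le_mul_of_nonneg_left (hfM s (Ioc_subset_Icc_self hs)) (by positivity)
    _ = (exp (-c * (a' - a)) - exp (-c * (b - a))) * M := by
        rw [intervalIntegral.integral_mul_const, integral_mul_exp_neg_mul_sub]
    _ ≤ exp (-c * (a' - a)) * M := by
        gcongr; linarith [exp_pos (-c * (b - a))]

lemma tendsto_mul_integral_exp_neg_mul_sub_of_apply_eq_zero {a b : ℝ} (hab : a < b)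
    {g : ℝ → ℝ} (hg : ContinuousOn g (Icc a b)) (hga : g a = 0) :
    Tendsto (fun n : ℕ => n * ∫ s in a..b, exp (-n * (s - a)) * g s) atTop (𝓝 0) := by
  obtain ⟨M, hM⟩ := isCompact_Icc.exists_bound_of_continuousOn hg
  rw [Metric.tendsto_nhds]
  intro ε hε
  obtain ⟨δ, hδ, hgδ⟩ := Metric.continuousWithinAt_iff.mp (hg a ⟨le_rfl, hab.le⟩) (ε / 2)
    (half_pos hε)
  -- Split `[a, b]` at `m`: near `a` the integrand is small, beyond `m` the kernel is small.
  set m := min (a + δ / 2) b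
  have ham : a < m := lt_min (by linarith) hab
  have hmb : m ≤ b := min_le_right _ _
  have hg_near : ∀ s ∈ Icc a m, |g s| ≤ ε / 2 := fun s hs => by
    have hs' : s ∈ Icc a b := ⟨hs.1, hs.2.trans hmb⟩
    have hsa : dist s a < δ := by
      rw [Real.dist_eq, abs_of_nonneg (by linarith [hs.1])]
      linarith [hs.2, min_le_left (a + δ / 2) b]
    simpa [Real.dist_eq, hga] using (hgδ hs' hsa).le
  have hint : ∀ n : ℕ, ∀ a' b', a' ≤ b' → Icc a' b' ⊆ Icc a b →
      IntervalIntegrable (fun s => exp (-n * (s - a)) * g s) volume a' b' := fun n a' b' h h' =>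
    ((hg.mono h').intervalIntegrable_of_Icc h).continuousOn_mul (by fun_prop)
  have hfar : ∀ᶠ n : ℕ in atTop, exp (-n * (m - a)) * M < ε / 2 := by
    have := (tendsto_exp_neg_natCast_mul (sub_pos.mpr ham)).mul_const M
    rw [zero_mul] at this
    exact this.eventually (gt_mem_nhds (half_pos hε))
  filter_upwards [hfar] with n hn
  have hn0 : (0 : ℝ) ≤ n := n.cast_nonneg
  rw [Real.dist_eq, sub_zero, ← intervalIntegral.integral_add_adjacent_intervals
    (hint n a m ham.le (Icc_subset_Icc le_rfl hmb))
    (hint n m b hmb (Icc_subset_Icc ham.le le_rfl)), mul_add]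
  calc |(n * ∫ s in a..m, exp (-n * (s - a)) * g s) + n * ∫ s in m..b, exp (-n * (s - a)) * g s|
      ≤ exp (-n * (a - a)) * (ε / 2) + exp (-n * (m - a)) * M :=
        (abs_add_le _ _).trans (add_le_add
          (abs_mul_integral_exp_neg_mul_sub_mul_le hn0 ham.le hg_near)
          (abs_mul_integral_exp_neg_mul_sub_mul_le hn0 hmb
            fun s hs => by simpa using hM s ⟨ham.le.trans hs.1, hs.2⟩))
    _ < ε := by rw [sub_self, mul_zero, exp_zero]; linarith

lemma tendsto_mul_integral_exp_neg_mul_sub {a b : ℝ} (hab : a < b)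
    {f : ℝ → ℝ} (hf : ContinuousOn f (Icc a b)) :
    Tendsto (fun n : ℕ => n * ∫ s in a..b, exp (-n * (s - a)) * f s) atTop (𝓝 (f a)) := by
  have hsplit : ∀ n : ℕ, n * ∫ s in a..b, exp (-n * (s - a)) * f s
      = n * (∫ s in a..b, exp (-n * (s - a)) * (f s - f a))
        + (1 - exp (-n * (b - a))) * f a := by
    intro n
    have hmass := integral_mul_exp_neg_mul_sub n a a b
    rw [sub_self, mul_zero, exp_zero] at hmass
    rw [← hmass, ← intervalIntegral.integral_mul_const, ← intervalIntegral.integral_const_mul,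
      ← intervalIntegral.integral_const_mul, ← intervalIntegral.integral_add]
    · congr 1; ext s; ring
    all_goals exact ContinuousOn.intervalIntegrable_of_Icc hab.le (by fun_prop)
  have hlim := (tendsto_mul_integral_exp_neg_mul_sub_of_apply_eq_zero hab
    (hf.sub continuousOn_const) (sub_self _)).add
    (((tendsto_exp_neg_natCast_mul (sub_pos.mpr hab)).const_sub 1).mul_const (f a))
  simp only [hsplit]
  simpa using hlim

/-- `exp (-c (b - a)) x + c ∫_a^b exp (-c (s - a)) f s ds` is the mean of `f (a + τ)` on
`{a + τ < b}` and `x` on `{a + τ ≥ b}`, for `τ` exponentially distributed with rate `c`. -/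
noncomputable def expKernelAverage (c a b x : ℝ) (f : ℝ → ℝ) : ℝ :=
  exp (-c * (b - a)) * x + c * ∫ s in a..b, exp (-c * (s - a)) * f s

lemma tendsto_expKernelAverage {a b x : ℝ} (hab : a ≤ b) {f : ℝ → ℝ}
    (hf : ContinuousOn f (Icc a b)) :
    Tendsto (fun n : ℕ => expKernelAverage n a b x f) atTop
      (𝓝 (if a = b then x else f a)) := by
  rcases hab.eq_or_lt with rfl | hlt
  · simp [expKernelAverage]
  · rw [if_neg hlt.ne]
    simpa [expKernelAverage] using
      ((tendsto_exp_neg_natCast_mul (sub_pos.mpr hlt)).mul_const x).add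
        (tendsto_mul_integral_exp_neg_mul_sub hlt hf)

lemma abs_expKernelAverage_le {c a b x M : ℝ} (hc : 0 ≤ c) (hab : a ≤ b) {f : ℝ → ℝ}
    (hfM : ∀ s ∈ Icc a b, |f s| ≤ M) :
    |expKernelAverage c a b x f| ≤ |x| + M := by
  have hexp : exp (-c * (b - a)) ≤ 1 := exp_le_one_iff.mpr (by nlinarith)
  calc |expKernelAverage c a b x f|
      ≤ exp (-c * (b - a)) * |x| + exp (-c * (a - a)) * M := by
        refine (abs_add_le _ _).trans
          (add_le_add ?_ (abs_mul_integral_exp_neg_mul_sub_mul_le hc hab hfM))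
        rw [abs_mul, abs_of_pos (exp_pos _)]
    _ ≤ |x| + M := by
        rw [sub_self, mul_zero, exp_zero, one_mul]
        gcongr
        exact mul_le_of_le_one_left (abs_nonneg x) hexp

lemma measurable_intervalIntegral_of_measurable_uncurry {Ω : Type*} [MeasurableSpace Ω]
    {f : Ω → ℝ → ℝ} (hf : Measurable (Function.uncurry f)) {a b : Ω → ℝ}
    (ha : Measurable a) (hb : Measurable b) :
    Measurable fun ω => ∫ s in a ω..b ω, f ω s := by
  have hIoc : ∀ {a b : Ω → ℝ}, Measurable a → Measurable b →
      Measurable fun ω => ∫ s in Ioc (a ω) (b ω), f ω s := by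
    intro a b ha hb
    have hset : MeasurableSet {p : Ω × ℝ | p.2 ∈ Ioc (a p.1) (b p.1)} :=
      (measurableSet_lt (ha.comp measurable_fst) measurable_snd).inter
        (measurableSet_le measurable_snd (hb.comp measurable_fst))
    simp_rw [← integral_indicator measurableSet_Ioc]
    exact (StronglyMeasurable.integral_prod_right' (ν := volume)
      (hf.indicator hset).stronglyMeasurable).measurable
  simp_rw [intervalIntegral]
  exact (hIoc ha hb).sub (hIoc hb ha)

lemma measurable_expKernelAverage {Ω : Type*} [MeasurableSpace Ω] (c : ℝ) {a b x : Ω → ℝ}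
    {f : Ω → ℝ → ℝ} (ha : Measurable a) (hb : Measurable b) (hx : Measurable x)
    (hf : Measurable (Function.uncurry f)) :
    Measurable fun ω => expKernelAverage c (a ω) (b ω) (x ω) (f ω) := by
  have hkernel : Measurable (Function.uncurry fun ω s => exp (-c * (s - a ω)) * f ω s) :=
    ((measurable_snd.sub (ha.comp measurable_fst)).const_mul _).exp.mul hf
  exact (((hb.sub ha).const_mul _).exp.mul hx).add
    ((measurable_intervalIntegral_of_measurable_uncurry hkernel ha hb).const_mul c)

lemma IsCompact.le_biSup_of_continuousOn {β α : Type*} [TopologicalSpace β]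
    [ConditionallyCompleteLinearOrder α] [TopologicalSpace α] [ClosedIciTopology α]
    {s : Set β} (hs : IsCompact s) {g : β → α} (hg : ContinuousOn g s) {t : β} (ht : t ∈ s) :
    g t ≤ ⨆ r ∈ s, g r := by
  have : Nonempty α := ⟨g t⟩
  obtain ⟨M, hM⟩ := hs.bddAbove_image hg
  refine le_ciSup₂ (f := fun r (_ : r ∈ s) => g r) ⟨M, ?_⟩ t ht
  rintro _ ⟨_, ⟨r, rfl⟩, ⟨hr, rfl⟩⟩
  exact hM ⟨r, hr, rfl⟩

lemma tendsto_integral_sq_sub_of_sq_le {Ω : Type*} [MeasurableSpace Ω] {μ : Measure Ω}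
    {X : ℕ → Ω → ℝ} {Y H : Ω → ℝ} (hX : ∀ n, AEStronglyMeasurable (X n) μ)
    (hH : Integrable H μ) (hXH : ∀ n, ∀ᵐ ω ∂μ, X n ω ^ 2 ≤ H ω)
    (hlim : ∀ᵐ ω ∂μ, Tendsto (fun n => X n ω) atTop (𝓝 (Y ω))) :
    Tendsto (fun n => ∫ ω, (X n ω - Y ω) ^ 2 ∂μ) atTop (𝓝 0) := by
  have hY : AEStronglyMeasurable Y μ := aestronglyMeasurable_of_tendsto_ae atTop hX hlim
  have hYH : ∀ᵐ ω ∂μ, Y ω ^ 2 ≤ H ω := by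
    filter_upwards [ae_all_iff.mpr hXH, hlim] with ω hω hωlim
    exact le_of_tendsto' (hωlim.pow 2) hω
  have hdom : ∀ n, ∀ᵐ ω ∂μ, ‖(X n ω - Y ω) ^ 2‖ ≤ 4 * H ω := fun n => by
    filter_upwards [hXH n, hYH] with ω hXω hYω
    rw [Real.norm_eq_abs, abs_of_nonneg (sq_nonneg _)]
    nlinarith [sq_nonneg (X n ω + Y ω)]
  have hsq : ∀ᵐ ω ∂μ, Tendsto (fun n => (X n ω - Y ω) ^ 2) atTop (𝓝 0) := by
    filter_upwards [hlim] with ω hω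
    simpa using (hω.sub_const (Y ω)).pow 2
  simpa using tendsto_integral_of_dominated_convergence _ (fun n => ((hX n).sub hY).pow 2)
    (hH.const_mul 4) hdom hsq

theorem exponential_kernel_convergence_general
    {Ω : Type*} [MeasurableSpace Ω] (P : Measure Ω)
    (T : ℝ)
    (ξ : Ω → ℝ) (S : ℝ → Ω → ℝ) (ν : Ω → ℝ)
    (hξm : Measurable ξ) (hξ2 : Integrable (fun ω => (ξ ω) ^ 2) P)
    (hScont : ∀ ω, Continuous (fun t => S t ω))
    (hSmeas : Measurable (Function.uncurry fun t ω => S t ω))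
    (hSint : Integrable (fun ω => ⨆ t ∈ Icc (0 : ℝ) T, (S t ω) ^ 2) P)
    (hνm : Measurable ν) (hν : ∀ ω, ν ω ∈ Icc (0 : ℝ) T) :
    (∀ᵐ ω ∂P,
      Filter.Tendsto
        (fun n : ℕ => Real.exp (-(n : ℝ) * (T - ν ω)) * ξ ω
          + (n : ℝ) * ∫ s in (ν ω)..T, Real.exp (-(n : ℝ) * (s - ν ω)) * S s ω)
        Filter.atTop
        (nhds (if ν ω = T then ξ ω else S (ν ω) ω))) ∧
    Filter.Tendsto
      (fun n : ℕ => ∫ ω,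
        (Real.exp (-(n : ℝ) * (T - ν ω)) * ξ ω
          + (n : ℝ) * (∫ s in (ν ω)..T, Real.exp (-(n : ℝ) * (s - ν ω)) * S s ω)
          - (if ν ω = T then ξ ω else S (ν ω) ω)) ^ 2 ∂P)
      Filter.atTop (nhds 0) := by
  set Q : Ω → ℝ := fun ω => ⨆ t ∈ Icc (0 : ℝ) T, (S t ω) ^ 2
  have hSQ : ∀ ω, ∀ t ∈ Icc (0 : ℝ) T, S t ω ^ 2 ≤ Q ω := fun ω _ ht =>
    isCompact_Icc.le_biSup_of_continuousOn ((hScont ω).pow 2).continuousOn ht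
  have hconv : ∀ ω, Tendsto (fun n : ℕ => expKernelAverage n (ν ω) T (ξ ω) (S · ω)) atTop
      (𝓝 (if ν ω = T then ξ ω else S (ν ω) ω)) := fun ω =>
    tendsto_expKernelAverage (hν ω).2 (hScont ω).continuousOn
  have hbound : ∀ (n : ℕ) ω,
      expKernelAverage n (ν ω) T (ξ ω) (S · ω) ^ 2 ≤ 2 * ξ ω ^ 2 + 2 * Q ω := by
    intro n ω
    have hQ : 0 ≤ Q ω := (sq_nonneg _).trans (hSQ ω _ (hν ω))
    have habs := abs_expKernelAverage_le (x := ξ ω) (M := √(Q ω)) n.cast_nonneg (hν ω).2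
      fun s hs => abs_le_sqrt (hSQ ω s ⟨(hν ω).1.trans hs.1, hs.2⟩)
    calc expKernelAverage n (ν ω) T (ξ ω) (S · ω) ^ 2
        ≤ (|ξ ω| + √(Q ω)) ^ 2 := sq_le_sq' (by linarith [abs_le.mp habs]) (le_of_abs_le habs)
      _ ≤ 2 * (|ξ ω| ^ 2 + √(Q ω) ^ 2) := add_sq_le
      _ = 2 * ξ ω ^ 2 + 2 * Q ω := by rw [sq_abs, sq_sqrt hQ]; ring
  refine ⟨ae_of_all _ hconv, tendsto_integral_sq_sub_of_sq_le (fun n => ?_)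
    ((hξ2.const_mul 2).add (hSint.const_mul 2)) (fun n => ae_of_all _ (hbound n))
    (ae_of_all _ hconv)⟩
  exact (measurable_expKernelAverage (f := fun ω s => S s ω) _ hνm measurable_const hξm
    (hSmeas.comp measurable_swap)).aestronglyMeasurable

/-- Exponential-kernel convergence used in the penalization argument: for `ξ ∈ L²`,
a continuous process `S` with `E[sup_t S_t²] < ∞` and a random time `ν` with `0 ≤ ν ≤ T`,
`e^{-n(T-ν)} ξ + n ∫_ν^T e^{-n(s-ν)} S_s ds → ξ·1_{ν=T} + S_ν·1_{ν<T}`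
almost surely and in `L²` as `n → ∞`. -/
theorem exponential_kernel_convergence
    {Ω : Type*} [MeasurableSpace Ω] (P : Measure Ω) [IsProbabilityMeasure P]
    (T : ℝ) (hT : 0 < T)
    (ξ : Ω → ℝ) (S : ℝ → Ω → ℝ) (ν : Ω → ℝ)
    (hξm : Measurable ξ) (hξ2 : Integrable (fun ω => (ξ ω) ^ 2) P)
    (hScont : ∀ ω, Continuous (fun t => S t ω))
    (hSmeas : Measurable (Function.uncurry fun t ω => S t ω))
    (hSint : Integrable (fun ω => ⨆ t ∈ Icc (0 : ℝ) T, (S t ω) ^ 2) P)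
    (hνm : Measurable ν) (hν : ∀ ω, ν ω ∈ Icc (0 : ℝ) T) :
    (∀ᵐ ω ∂P,
      Filter.Tendsto
        (fun n : ℕ => Real.exp (-(n : ℝ) * (T - ν ω)) * ξ ω
          + (n : ℝ) * ∫ s in (ν ω)..T, Real.exp (-(n : ℝ) * (s - ν ω)) * S s ω)
        Filter.atTop
        (nhds (if ν ω = T then ξ ω else S (ν ω) ω))) ∧
    Filter.Tendsto
      (fun n : ℕ => ∫ ω,
        (Real.exp (-(n : ℝ) * (T - ν ω)) * ξ ω
          + (n : ℝ) * (∫ s in (ν ω)..T, Real.exp (-(n : ℝ) * (s - ν ω)) * S s ω)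
          - (if ν ω = T then ξ ω else S (ν ω) ω)) ^ 2 ∂P)
      Filter.atTop (nhds 0) :=
  exponential_kernel_convergence_general P T ξ S ν hξm hξ2 hScont hSmeas hSint hνm hν
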